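/- arXiv:1902.00814 — 4 statements merged into one kernel-verified Lean document; each statement's English description precedes it below -/
import Mathlib

section
/- Let n be a positive integer, let p : {1,…,n} → ℝ be nonnegative with Σ_{i=1}^n p_i = 1, let Δ ∈ (0, 1], η ≥ 0, L ≥ 1/4, and let s : {1,…,n} → ℝ satisfy |s_i| ≤ 1 for all i, and |s_i − log(1/p_i)/(4L)| ≤ η for every i with p_i ≥ Δ. Then |Σ_{i=1}^n p_i s_i − (Σ_{i=1}^n p_i log(1/p_i))/(4L)| ≤ η + n · Δ · (log(1/Δ) + 1). -/
/-- Key error estimate for quantum Shannon entropy estimation: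
if `s i` approximates `log(1/p i)/(4L)` for `p i ≥ Δ` and is bounded by `1` everywhere,
then `Σ p i * s i` approximates the rescaled Shannon entropy. -/
theorem stmt_8 (n : ℕ) (hn : 0 < n) (p s : Fin n → ℝ)
    (hp : ∀ i, 0 ≤ p i) (hpsum : ∑ i, p i = 1)
    (Δ η L : ℝ) (hΔ : Δ ∈ Set.Ioc (0 : ℝ) 1) (hη : 0 ≤ η) (hL : 1 / 4 ≤ L)
    (hs1 : ∀ i, |s i| ≤ 1)
    (hs2 : ∀ i, Δ ≤ p i → |s i - Real.log (1 / p i) / (4 * L)| ≤ η) :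
    |(∑ i, p i * s i) - (∑ i, p i * Real.log (1 / p i)) / (4 * L)| ≤
      η + n * Δ * (Real.log (1 / Δ) + 1) := by
  obtain ⟨hΔ0, hΔ1⟩ := hΔ
  have hlogΔ : 0 ≤ Real.log (1 / Δ) := Real.log_nonneg (by rw [le_div_iff₀ hΔ0]; linarith)
  set C := Δ * (Real.log (1 / Δ) + 1) with hC
  have hC0 : 0 ≤ C := mul_nonneg hΔ0.le (by linarith)
  have h4L : (1:ℝ) ≤ 4 * L := by linarith
  have key : ∀ i, p i * |s i - Real.log (1 / p i) / (4 * L)| ≤ η * p i + C := by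
    intro i
    by_cases hb : Δ ≤ p i
    · have h1 := hs2 i hb
      nlinarith [mul_le_mul_of_nonneg_left h1 (hp i)]
    · push_neg at hb
      rcases eq_or_lt_of_le (hp i) with h0 | h0
      · simp only [← h0]
        simpa using add_nonneg (mul_nonneg hη le_rfl) hC0
      · have hpi1 : p i ≤ 1 := hb.le.trans hΔ1
        have hlogp : 0 ≤ Real.log (1 / p i) :=
          Real.log_nonneg (by rw [le_div_iff₀ h0]; linarith)
        have hq0 : 0 ≤ Real.log (1 / p i) / (4 * L) := div_nonneg hlogp (by linarith)
        have habs : |s i - Real.log (1 / p i) / (4 * L)| ≤ 1 + Real.log (1 / p i) / (4 * L) := by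
          have h2 := hs1 i
          have h3 := abs_sub (s i) (Real.log (1 / p i) / (4 * L))
          rw [abs_of_nonneg hq0] at h3
          linarith
        have hdiv : Real.log (1 / p i) / (4 * L) ≤ Real.log (1 / p i) :=
          div_le_self hlogp h4L
        -- log(1/p) = log(1/Δ) + log(Δ/p)
        have hsplit : Real.log (1 / p i) = Real.log (1 / Δ) + Real.log (Δ / p i) := by
          rw [← Real.log_mul (by positivity) (by positivity)]
          congr 1
          field_simp
        have hle : Real.log (Δ / p i) ≤ Δ / p i - 1 :=
          Real.log_le_sub_one_of_pos (div_pos hΔ0 h0)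
        have hmul : p i * Real.log (Δ / p i) ≤ Δ - p i := by
          have := mul_le_mul_of_nonneg_left hle (hp i)
          have hne : p i ≠ 0 := ne_of_gt h0
          calc p i * Real.log (Δ / p i) ≤ p i * (Δ / p i - 1) := this
            _ = Δ - p i := by field_simp
        have hxlog : p i * Real.log (1 / p i) ≤ p i * Real.log (1 / Δ) + Δ - p i := by
          rw [hsplit, mul_add]; linarith
        have hxlogΔ : p i * Real.log (1 / Δ) ≤ Δ * Real.log (1 / Δ) :=
          mul_le_mul_of_nonneg_right hb.le hlogΔ
        have step1 : p i * |s i - Real.log (1 / p i) / (4 * L)| ≤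
            p i + p i * (Real.log (1 / p i) / (4 * L)) := by
          have := mul_le_mul_of_nonneg_left habs (hp i)
          linarith [this, mul_add (p i) 1 (Real.log (1 / p i) / (4 * L))]
        have step2 : p i * (Real.log (1 / p i) / (4 * L)) ≤ p i * Real.log (1 / p i) :=
          mul_le_mul_of_nonneg_left hdiv (hp i)
        have : p i * |s i - Real.log (1 / p i) / (4 * L)| ≤ C := by
          rw [hC]; nlinarith
        nlinarith [mul_nonneg hη (hp i)]
  have hrw : (∑ i, p i * Real.log (1 / p i)) / (4 * L) =
      ∑ i, p i * (Real.log (1 / p i) / (4 * L)) := by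
    rw [Finset.sum_div]
    exact Finset.sum_congr rfl fun i _ => (mul_div_assoc _ _ _)
  rw [hrw, ← Finset.sum_sub_distrib]
  calc |∑ i, (p i * s i - p i * (Real.log (1 / p i) / (4 * L)))|
      ≤ ∑ i, |p i * s i - p i * (Real.log (1 / p i) / (4 * L))| :=
        Finset.abs_sum_le_sum_abs _ _
    _ = ∑ i, p i * |s i - Real.log (1 / p i) / (4 * L)| := by
        refine Finset.sum_congr rfl fun i _ => ?_
        rw [← mul_sub, abs_mul, abs_of_nonneg (hp i)]
    _ ≤ ∑ i, (η * p i + C) := Finset.sum_le_sum fun i _ => key i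
    _ = η + n * C := by
        rw [Finset.sum_add_distrib, ← Finset.mul_sum, hpsum, Finset.sum_const,
          Finset.card_univ, Fintype.card_fin, nsmul_eq_mul, mul_one]
    _ = η + n * Δ * (Real.log (1 / Δ) + 1) := by rw [hC]; ring
end

section
/- Let A and B be n×n complex matrices such that A is Hermitian, and both B − A and B + A are positive semidefinite. Then the real part of Tr(A·A·B) is at least Σ_{i=1}^n |λ_i|³, where λ_1,…,λ_n are the eigenvalues of A. -/
/-!
Conjugating by the eigenvector unitary `U` of `A` turns `A` into `D = diag(λ)` and `B` into
`C = Uᴴ B U`, keeps `C ± D` positive semidefinite and leaves the trace unchanged. The diagonal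
entries of `C ± D` are then nonnegative, i.e. `|λᵢ| ≤ Re Cᵢᵢ`, and
`Re Tr(A A B) = Re Tr(D² C) = ∑ λᵢ² Re Cᵢᵢ ≥ ∑ |λᵢ|³`.
-/

open ComplexOrder Matrix Unitary

namespace Matrix

variable {𝕜 n : Type*} [RCLike 𝕜]

lemma abs_re_diag_le_re_diag {A B : Matrix n n 𝕜} (h₁ : (B - A).PosSemidef)
    (h₂ : (B + A).PosSemidef) (i : n) : |RCLike.re (A i i)| ≤ RCLike.re (B i i) := by
  have hsub := RCLike.nonneg_iff.mp (h₁.diag_nonneg (i := i))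
  have hadd := RCLike.nonneg_iff.mp (h₂.diag_nonneg (i := i))
  simp only [sub_apply, add_apply, map_sub, map_add] at hsub hadd
  exact abs_le.mpr ⟨by linarith [hadd.1], by linarith [hsub.1]⟩

variable [Fintype n] [DecidableEq n]

lemma PosSemidef.conjStarAlgAut {A : Matrix n n 𝕜} (hA : A.PosSemidef) (U : unitaryGroup n 𝕜) :
    (conjStarAlgAut 𝕜 _ U A).PosSemidef :=
  hA.mul_mul_conjTranspose_same (U : Matrix n n 𝕜)

lemma trace_conjStarAlgAut (U : unitaryGroup n 𝕜) (A : Matrix n n 𝕜) :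
    (conjStarAlgAut 𝕜 _ U A).trace = A.trace := by
  rw [conjStarAlgAut_apply, trace_mul_cycle, coe_star_mul_self, one_mul]

lemma trace_diagonal_mul (d : n → 𝕜) (A : Matrix n n 𝕜) :
    (diagonal d * A).trace = ∑ i, d i * A i i := by
  simp [trace, diagonal_mul]

namespace IsHermitian

variable {A : Matrix n n 𝕜} (hA : A.IsHermitian)

lemma re_trace_mul_self_mul (B : Matrix n n 𝕜) :
    RCLike.re (A * A * B).trace = ∑ i, hA.eigenvalues i ^ 2 *
      RCLike.re (conjStarAlgAut 𝕜 _ (star hA.eigenvectorUnitary) B i i) := by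
  rw [← trace_conjStarAlgAut (star hA.eigenvectorUnitary), map_mul, map_mul,
    conjStarAlgAut_star_eigenvectorUnitary, diagonal_mul_diagonal, trace_diagonal_mul,
    map_sum]
  simp only [Function.comp_apply, ← RCLike.ofReal_mul, RCLike.re_ofReal_mul, sq]

lemma abs_eigenvalues_le {B : Matrix n n 𝕜} (h₁ : (B - A).PosSemidef) (h₂ : (B + A).PosSemidef)
    (i : n) : |hA.eigenvalues i| ≤
      RCLike.re (conjStarAlgAut 𝕜 _ (star hA.eigenvectorUnitary) B i i) := by
  have h₁' := h₁.conjStarAlgAut (star hA.eigenvectorUnitary)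
  have h₂' := h₂.conjStarAlgAut (star hA.eigenvectorUnitary)
  rw [map_sub, hA.conjStarAlgAut_star_eigenvectorUnitary] at h₁'
  rw [map_add, hA.conjStarAlgAut_star_eigenvectorUnitary] at h₂'
  simpa using abs_re_diag_le_re_diag h₁' h₂' i

end IsHermitian

end Matrix

/-- Trace inequality: if `A` is Hermitian and `B ± A` are positive semidefinite, then
`Re Tr(A·A·B) ≥ Σᵢ |λᵢ|³` where the `λᵢ` are the eigenvalues of `A`. -/
theorem stmt_9 (n : ℕ) (A B : Matrix (Fin n) (Fin n) ℂ)
    (hA : A.IsHermitian) (h1 : (B - A).PosSemidef) (h2 : (B + A).PosSemidef) :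
    ∑ i, |hA.eigenvalues i| ^ 3 ≤ ((A * A * B).trace).re := by
  rw [← RCLike.re_to_complex, hA.re_trace_mul_self_mul]
  gcongr with i
  calc |hA.eigenvalues i| ^ 3 = hA.eigenvalues i ^ 2 * |hA.eigenvalues i| := by
        rw [← sq_abs]; ring
    _ ≤ _ := by gcongr; exact hA.abs_eigenvalues_le h1 h2 i
end

section
/- Let ρ and σ be n×n positive semidefinite complex matrices. Then the real part of Tr((ρ−σ)·(ρ−σ)·(ρ+σ)) is at least Σ_{i=1}^n |μ_i|³, where μ_1,…,μ_n are the eigenvalues of the Hermitian matrix ρ − σ. -/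
open ComplexOrder

/-!
Diagonalize `ρ - σ = U D U*` with `D = diag μ`. Then `Tr((ρ-σ)²(ρ+σ)) = Σ μᵢ² (U*(ρ+σ)U)ᵢᵢ`.
The diagonal entries `pᵢ, qᵢ` of `U*ρU` and `U*σU` are nonnegative with `pᵢ - qᵢ = μᵢ`, so
`(U*(ρ+σ)U)ᵢᵢ = pᵢ + qᵢ ≥ |μᵢ|`, and each summand is at least `|μᵢ|³`.
-/

namespace Matrix

variable {𝕜 n : Type*} [RCLike 𝕜]

lemma PosSemidef.abs_re_diag_sub_le_re_diag_add {P Q : Matrix n n 𝕜} (hP : P.PosSemidef)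
    (hQ : Q.PosSemidef) (i : n) :
    |RCLike.re ((P - Q) i i)| ≤ RCLike.re ((P + Q) i i) := by
  have hp := RCLike.nonneg_iff.mp (hP.diag_nonneg (i := i))
  have hq := RCLike.nonneg_iff.mp (hQ.diag_nonneg (i := i))
  simp only [sub_apply, add_apply, map_sub, map_add]
  rw [abs_sub_le_iff]
  constructor <;> linarith

variable [Fintype n] [DecidableEq n]

lemma IsHermitian.star_eigenvectorUnitary_mul_mul_apply_self {A : Matrix n n 𝕜}
    (hA : A.IsHermitian) (i : n) :
    (star (hA.eigenvectorUnitary : Matrix n n 𝕜) * A * hA.eigenvectorUnitary) i i =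
      hA.eigenvalues i := by
  rw [← Unitary.conjStarAlgAut_star_apply (S := 𝕜), hA.conjStarAlgAut_star_eigenvectorUnitary,
    diagonal_apply_eq, Function.comp_apply]

lemma IsHermitian.trace_mul_self_mul {A : Matrix n n 𝕜} (hA : A.IsHermitian)
    (B : Matrix n n 𝕜) :
    (A * A * B).trace = ∑ i, (hA.eigenvalues i : 𝕜) ^ 2 *
      (star (hA.eigenvectorUnitary : Matrix n n 𝕜) * B * hA.eigenvectorUnitary) i i := by
  set U : Matrix n n 𝕜 := (hA.eigenvectorUnitary : Matrix n n 𝕜)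
  have hAA : A * A = U * diagonal (fun i ↦ (hA.eigenvalues i : 𝕜) ^ 2) * star U := by
    conv_lhs => rw [hA.spectral_theorem]
    rw [← map_mul, Unitary.conjStarAlgAut_apply, diagonal_mul_diagonal]
    simp only [Function.comp_apply, sq, U]
  rw [hAA, mul_assoc, mul_assoc, trace_mul_comm, mul_assoc]
  simp only [trace, diag_apply, diagonal_mul]

end Matrix

/-- For positive semidefinite `ρ, σ`, the quantity `Re Tr((ρ-σ)²(ρ+σ))` is at least
the cube of the Schatten 3-norm of `ρ - σ`. -/
theorem stmt_10 (n : ℕ) (ρ σ : Matrix (Fin n) (Fin n) ℂ)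
    (hρ : ρ.PosSemidef) (hσ : σ.PosSemidef) :
    ∑ i, |(hρ.isHermitian.sub hσ.isHermitian).eigenvalues i| ^ 3 ≤
      (((ρ - σ) * (ρ - σ) * (ρ + σ)).trace).re := by
  set hΔ := hρ.isHermitian.sub hσ.isHermitian
  set U : Matrix (Fin n) (Fin n) ℂ := (hΔ.eigenvectorUnitary : Matrix (Fin n) (Fin n) ℂ)
  have hconj {P : Matrix (Fin n) (Fin n) ℂ} (hP : P.PosSemidef) : (star U * P * U).PosSemidef :=
    hP.conjTranspose_mul_mul_same U
  rw [hΔ.trace_mul_self_mul, Complex.re_sum]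
  refine Finset.sum_le_sum fun i _ ↦ ?_
  have hμ : |hΔ.eigenvalues i| ≤ ((star U * (ρ + σ) * U) i i).re := by
    have h := (hconj hρ).abs_re_diag_sub_le_re_diag_add (hconj hσ) i
    rwa [← sub_mul, ← mul_sub, ← add_mul, ← mul_add,
      hΔ.star_eigenvectorUnitary_mul_mul_apply_self, RCLike.ofReal_re] at h
  calc |hΔ.eigenvalues i| ^ 3 = hΔ.eigenvalues i ^ 2 * |hΔ.eigenvalues i| := by
        rw [pow_succ, sq_abs]
    _ ≤ hΔ.eigenvalues i ^ 2 * ((star U * (ρ + σ) * U) i i).re := by gcongr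
    _ = ((hΔ.eigenvalues i : ℂ) ^ 2 * (star U * (ρ + σ) * U) i i).re := by
        rw [← Complex.ofReal_pow, Complex.re_ofReal_mul]
end

section
/- Let n be a positive integer, let p : {1,…,n} → ℝ be nonnegative, let φ_1,…,φ_n ∈ ℂ^n and ψ_1,…,ψ_n ∈ ℂ^n be orthonormal families, and let U_ρ be an n²×n² complex matrix (on ℂ^n ⊗ ℂ^n) with U_ρ(e_0 ⊗ e_0) = Σ_{i=1}^n √(p_i) · φ_i ⊗ ψ_i, and V an n²×n² matrix (on ℂ^n ⊗ ℂ^n) with V(e_0 ⊗ e_0) = Σ_{j=1}^n (1/√n) · e_j ⊗ e_j. On ℂ^n ⊗ ℂ^n ⊗ ℂ^n define U' := (I_n ⊗ U_ρᴴ)(V ⊗ I_n), Π' := I_n ⊗ E_{00} ⊗ E_{00}, and Π̃ := E_{00} ⊗ E_{00} ⊗ I_n, where U_ρᴴ acts on the last two tensor factors and V on the first two. Then Π' · U' · Π̃ = Σ_{i=1}^n √(p_i/n) · (φ'_i e_0*) ⊗ E_{00} ⊗ (e_0 ψ_i*), where φ'_i ∈ ℂ^n is the entrywise complex conjugate of φ_i,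 φ'_i e_0* is the n×n matrix whose (a,b) entry is φ'_i(a) if b = 0 and 0 otherwise, and e_0 ψ_i* is the n×n matrix whose (a,b) entry is conj(ψ_i(b)) if a = 0 and 0 otherwise. -/
open Kronecker Matrix

/-- The `j`-th standard basis vector of `ℂ^k`. -/
noncomputable def stdKet (k : ℕ) [NeZero k] (j : Fin k) : Fin k → ℂ :=
  fun a => if a = j then 1 else 0

/-- The `n × n` rank-one matrix `v e₀*`, whose `(a,b)` entry is `v a` if `b = 0` and `0` otherwise. -/
noncomputable def vecKetBraZero (n : ℕ) [NeZero n] (v : Fin n → ℂ) :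
    Matrix (Fin n) (Fin n) ℂ :=
  Matrix.of fun a b => if b = 0 then v a else 0

/-- The `n × n` rank-one matrix `e₀ w*`, whose `(a,b)` entry is `conj (w b)` if `a = 0`
and `0` otherwise. -/
noncomputable def ketZeroVecBra (n : ℕ) [NeZero n] (w : Fin n → ℂ) :
    Matrix (Fin n) (Fin n) ℂ :=
  Matrix.of fun a b => if a = 0 then star (w b) else 0

/-- The `n × n` matrix `E₀₀` with a single one in the top-left entry. -/
noncomputable def E₀₀ (n : ℕ) [NeZero n] : Matrix (Fin n) (Fin n) ℂ :=
  Matrix.single 0 0 1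

/-!
Only the column `(0,0)` of `U_ρ` and of `V` enters, because both projections are rank one on
the factors those oracles act on. Writing `U'` entrywise,
`U' (a,0,0) (0,0,c) = Σ_y conj (U_ρ (y,c) (0,0)) V (a,y) (0,0) = conj (U_ρ (a,c) (0,0)) / √n`,
and expanding `U_ρ (a,c) (0,0) = Σᵢ √pᵢ φᵢ(a) ψᵢ(c)` gives the claim.
-/

lemma mulVec_stdKet_prod {m : Type*} [Fintype m] {k l : ℕ} [NeZero k] [NeZero l]
    (M : Matrix m (Fin k × Fin l) ℂ) (i : Fin k) (j : Fin l) :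
    M *ᵥ (fun q : Fin k × Fin l => stdKet k i q.1 * stdKet l j q.2) = M.col (i, j) := by
  have : (fun q : Fin k × Fin l => stdKet k i q.1 * stdKet l j q.2) = Pi.single (i, j) 1 := by
    ext ⟨a, b⟩
    simp only [stdKet, Pi.single_apply, ite_zero_mul_ite_zero, mul_one, Prod.mk.injEq]
  rw [this, mulVec_single_one]

lemma one_kronecker_conjTranspose_mul_reindex_kronecker_one_apply
    {α β γ : Type*} [Fintype α] [Fintype β] [Fintype γ] [DecidableEq α] [DecidableEq γ]
    (U : Matrix (β × γ) (β × γ) ℂ) (V : Matrix (α × β) (α × β) ℂ) (a a' : α) (b b' : β)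
    (c c' : γ) :
    (((1 : Matrix α α ℂ) ⊗ₖ Uᴴ) * reindex (Equiv.prodAssoc α β γ) (Equiv.prodAssoc α β γ)
        (V ⊗ₖ (1 : Matrix γ γ ℂ))) (a, b, c) (a', b', c') =
      ∑ y, star (U (y, c') (b, c)) * V (a, y) (a', b') := by
  simp [mul_apply, Fintype.sum_prod_type, one_apply, ite_mul, mul_ite]

section Projections

variable {n : ℕ} [NeZero n]

lemma one_kronecker_E₀₀_mul_mul_E₀₀_kronecker_one_apply
    (M : Matrix (Fin n × Fin n × Fin n) (Fin n × Fin n × Fin n) ℂ) (a a' b b' c c' : Fin n) :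
    (((1 : Matrix (Fin n) (Fin n) ℂ) ⊗ₖ (E₀₀ n ⊗ₖ E₀₀ n)) * M *
        (E₀₀ n ⊗ₖ (E₀₀ n ⊗ₖ (1 : Matrix (Fin n) (Fin n) ℂ)))) (a, b, c) (a', b', c') =
      if b = 0 ∧ c = 0 ∧ a' = 0 ∧ b' = 0 then M (a, 0, 0) (0, 0, c') else 0 := by
  simp only [E₀₀, mul_apply, kroneckerMap_apply, one_apply, single_apply, ite_and, mul_ite,
    mul_one, mul_zero, ite_mul, one_mul, zero_mul, Finset.sum_ite_irrel, Fintype.sum_prod_type,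
    Finset.sum_ite_eq, Finset.mem_univ, if_true, Finset.sum_const_zero, Finset.sum_ite_eq']
  grind

lemma sum_smul_vecKetBraZero_kronecker_apply (s : Fin n → ℂ) (φ ψ : Fin n → Fin n → ℂ)
    (a a' b b' c c' : Fin n) :
    (∑ i, s i • (vecKetBraZero n (fun a => star (φ i a)) ⊗ₖ
        (E₀₀ n ⊗ₖ ketZeroVecBra n (ψ i)))) (a, b, c) (a', b', c') =
      if b = 0 ∧ c = 0 ∧ a' = 0 ∧ b' = 0 then ∑ i, s i * star (φ i a) * star (ψ i c')
      else 0 := by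
  simp only [vecKetBraZero, E₀₀, ketZeroVecBra, Matrix.sum_apply, Matrix.smul_apply,
    kroneckerMap_apply, of_apply, single_apply, mul_ite, ite_mul, one_mul, zero_mul, mul_zero,
    smul_eq_mul, Finset.sum_ite_irrel, Finset.sum_const_zero, mul_assoc]
  grind

end Projections

theorem stmt_15_general (n : ℕ) [NeZero n] (p : Fin n → ℝ)
    (φ ψ : Fin n → Fin n → ℂ)
    (Uρ V : Matrix (Fin n × Fin n) (Fin n × Fin n) ℂ)
    (hU : Uρ *ᵥ (fun q : Fin n × Fin n => stdKet n 0 q.1 * stdKet n 0 q.2) =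
      ∑ i : Fin n, (Real.sqrt (p i) : ℂ) •
        (fun q : Fin n × Fin n => φ i q.1 * ψ i q.2))
    (hV : V *ᵥ (fun q : Fin n × Fin n => stdKet n 0 q.1 * stdKet n 0 q.2) =
      ∑ j : Fin n, ((1 / Real.sqrt n : ℝ) : ℂ) •
        (fun q : Fin n × Fin n => stdKet n j q.1 * stdKet n j q.2)) :
    ((1 : Matrix (Fin n) (Fin n) ℂ) ⊗ₖ (E₀₀ n ⊗ₖ E₀₀ n)) *
      (((1 : Matrix (Fin n) (Fin n) ℂ) ⊗ₖ Uρᴴ) *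
        (Matrix.reindex (Equiv.prodAssoc (Fin n) (Fin n) (Fin n))
          (Equiv.prodAssoc (Fin n) (Fin n) (Fin n))
          (V ⊗ₖ (1 : Matrix (Fin n) (Fin n) ℂ)))) *
      (E₀₀ n ⊗ₖ (E₀₀ n ⊗ₖ (1 : Matrix (Fin n) (Fin n) ℂ))) =
    ∑ i : Fin n, (Real.sqrt (p i / n) : ℂ) •
      (vecKetBraZero n (fun a => star (φ i a)) ⊗ₖ (E₀₀ n ⊗ₖ ketZeroVecBra n (ψ i))) := by
  rw [mulVec_stdKet_prod] at hU hV
  have hUcol (y z : Fin n) : Uρ (y, z) (0, 0) = ∑ i, (Real.sqrt (p i) : ℂ) * (φ i y * ψ i z) := by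
    simpa [Finset.sum_apply] using congrFun hU (y, z)
  have hVcol (x y : Fin n) :
      V (x, y) (0, 0) = if x = y then ((1 / Real.sqrt n : ℝ) : ℂ) else 0 := by
    simpa [Finset.sum_apply, stdKet, eq_comm] using congrFun hV (x, y)
  ext ⟨a, b, c⟩ ⟨a', b', c'⟩
  rw [one_kronecker_E₀₀_mul_mul_E₀₀_kronecker_one_apply, sum_smul_vecKetBraZero_kronecker_apply]
  split_ifs
  · rw [one_kronecker_conjTranspose_mul_reindex_kronecker_one_apply]
    simp only [hUcol, hVcol, mul_ite, mul_zero, Finset.sum_ite_eq, Finset.mem_univ, if_true,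
      star_sum, Finset.sum_mul]
    refine Finset.sum_congr rfl fun i _ => ?_
    rw [Real.sqrt_div' _ (Nat.cast_nonneg n)]
    push_cast
    simp only [star_mul', RCLike.star_def, Complex.conj_ofReal]
    ring
  · rfl

/-- Projected unitary encoding built from a purified quantum query oracle for a density
operator `ρ = Σᵢ pᵢ |ψᵢ⟩⟨ψᵢ|`: with `U' = (I ⊗ U_ρᴴ)(V ⊗ I)` one has
`Π' U' Π̃ = Σᵢ √(pᵢ/n) (φ'ᵢ e₀*) ⊗ E₀₀ ⊗ (e₀ ψᵢ*)`. -/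
theorem stmt_15 (n : ℕ) [NeZero n] (p : Fin n → ℝ) (hp : ∀ i, 0 ≤ p i)
    (φ ψ : Fin n → Fin n → ℂ)
    (hφ : ∀ i j, (∑ a, star (φ i a) * φ j a) = if i = j then (1 : ℂ) else 0)
    (hψ : ∀ i j, (∑ a, star (ψ i a) * ψ j a) = if i = j then (1 : ℂ) else 0)
    (Uρ V : Matrix (Fin n × Fin n) (Fin n × Fin n) ℂ)
    (hU : Uρ *ᵥ (fun q : Fin n × Fin n => stdKet n 0 q.1 * stdKet n 0 q.2) =
      ∑ i : Fin n, (Real.sqrt (p i) : ℂ) •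
        (fun q : Fin n × Fin n => φ i q.1 * ψ i q.2))
    (hV : V *ᵥ (fun q : Fin n × Fin n => stdKet n 0 q.1 * stdKet n 0 q.2) =
      ∑ j : Fin n, ((1 / Real.sqrt n : ℝ) : ℂ) •
        (fun q : Fin n × Fin n => stdKet n j q.1 * stdKet n j q.2)) :
    ((1 : Matrix (Fin n) (Fin n) ℂ) ⊗ₖ (E₀₀ n ⊗ₖ E₀₀ n)) *
      (((1 : Matrix (Fin n) (Fin n) ℂ) ⊗ₖ Uρᴴ) *
        (Matrix.reindex (Equiv.prodAssoc (Fin n) (Fin n) (Fin n))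
          (Equiv.prodAssoc (Fin n) (Fin n) (Fin n))
          (V ⊗ₖ (1 : Matrix (Fin n) (Fin n) ℂ)))) *
      (E₀₀ n ⊗ₖ (E₀₀ n ⊗ₖ (1 : Matrix (Fin n) (Fin n) ℂ))) =
    ∑ i : Fin n, (Real.sqrt (p i / n) : ℂ) •
      (vecKetBraZero n (fun a => star (φ i a)) ⊗ₖ (E₀₀ n ⊗ₖ ketZeroVecBra n (ψ i))) :=
  stmt_15_general n p φ ψ Uρ V hU hV
end
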